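/- (Left-regularization) Let {x(t) : t ∈ ℝ} be a system of elements of a σ-lattice effect algebra E with x(t) ≤ x(s) for t < s, ⋀_t x(t) = 0, and ⋁_t x(t) = 1. Then x_l(t) := ⋁_{u<t} x(u) exists for each t (the supremum over a countable dense set suffices), and the system {x_l(t)} satisfies in addition the left-continuity condition ⋁_{t<s} x_l(t) = x_l(s) for all s. -/
import Mathlib


structure EffectAlgebra (E : Type*) where
  add : E → E → Option E
  zero : E
  one : E
  comm : ∀ a b, add a b = add b a
  assoc : ∀ a b c, (add a b).bind (fun d => add d c) = (add b c).bind (fun d => add a d)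
  orth : ∀ a : E, ∃! b, add a b = some one
  pos_one : ∀ a b, add a one = some b → a = zero

namespace EffectAlgebra

variable {E : Type*}

/-- The induced order: `a ≤ b` iff `a + c = b` for some `c`. -/
def le (EA : EffectAlgebra E) (a b : E) : Prop := ∃ c, EA.add a c = some b

/-- The orthosupplement `a'`, the unique element with `a + a' = 1`. -/
noncomputable def orthosupp (EA : EffectAlgebra E) (a : E) : E :=
  Classical.choose (EA.orth a).exists

/-- `s` is the supremum of `S` with respect to the induced order. -/
def IsSup (EA : EffectAlgebra E) (S : Set E) (s : E) : Prop :=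
  (∀ x ∈ S, EA.le x s) ∧ ∀ b, (∀ x ∈ S, EA.le x b) → EA.le s b

/-- `s` is the infimum of `S` with respect to the induced order. -/
def IsInf (EA : EffectAlgebra E) (S : Set E) (s : E) : Prop :=
  (∀ x ∈ S, EA.le s x) ∧ ∀ b, (∀ x ∈ S, EA.le b x) → EA.le b s

/-- Every increasing sequence has a supremum. -/
def MonotoneSigmaComplete (EA : EffectAlgebra E) : Prop :=
  ∀ f : ℕ → E, (∀ n, EA.le (f n) (f (n + 1))) → ∃ s, EA.IsSup (Set.range f) s

/-- A σ-lattice effect algebra: countable suprema and infima exist. -/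
def SigmaLattice (EA : EffectAlgebra E) : Prop :=
  (∀ f : ℕ → E, ∃ s, EA.IsSup (Set.range f) s) ∧
  (∀ f : ℕ → E, ∃ s, EA.IsInf (Set.range f) s)

/-- A complete lattice effect algebra: arbitrary suprema and infima exist. -/
def CompleteEA (EA : EffectAlgebra E) : Prop :=
  (∀ S : Set E, ∃ s, EA.IsSup S s) ∧ (∀ S : Set E, ∃ s, EA.IsInf S s)

/-- A lattice effect algebra: binary suprema and infima exist. -/
def LatticeEA (EA : EffectAlgebra E) : Prop :=
  (∀ a b : E, ∃ s, EA.IsSup {a, b} s) ∧ (∀ a b : E, ∃ s, EA.IsInf {a, b} s)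

end EffectAlgebra

/-- Borel subsets of the real line. -/
abbrev BorelSet := {A : Set ℝ // MeasurableSet A}

def bIio (t : ℝ) : BorelSet := ⟨Set.Iio t, measurableSet_Iio⟩
def bIic (t : ℝ) : BorelSet := ⟨Set.Iic t, measurableSet_Iic⟩

/-- An observable on a (monotone σ-complete) effect algebra: a unital,
additive map on the Borel σ-algebra preserving suprema of increasing sequences. -/
structure Observable {E : Type*} (EA : EffectAlgebra E) where
  toFun : BorelSet → E
  unital : toFun ⟨Set.univ, MeasurableSet.univ⟩ = EA.one
  additive : ∀ A B : BorelSet, Disjoint A.1 B.1 →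
    EA.add (toFun A) (toFun B) = some (toFun ⟨A.1 ∪ B.1, A.2.union B.2⟩)
  sup_cont : ∀ f : ℕ → BorelSet, (∀ n, (f n).1 ⊆ (f (n + 1)).1) →
    EA.IsSup (Set.range fun n => toFun (f n))
      (toFun ⟨⋃ n, (f n).1, MeasurableSet.iUnion (fun n => (f n).2)⟩)

namespace Observable

variable {E : Type*} {EA : EffectAlgebra E}

/-- The Olson (spectral) order on observables. -/
def OlsonLe (x y : Observable EA) : Prop :=
  ∀ t : ℝ, EA.le (y.toFun (bIio t)) (x.toFun (bIio t))

/-- An observable is bounded if `x(C) = 1` for some compact set `C`. -/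
def Bounded (x : Observable EA) : Prop :=
  ∃ C : Set ℝ, ∃ hC : IsCompact C, x.toFun ⟨C, hC.measurableSet⟩ = EA.one

/-- `x` is the question observable `q_a` of the element `a`. -/
def IsQuestion (x : Observable EA) (a : E) : Prop :=
  ∀ t : ℝ, x.toFun (bIio t) =
    if t ≤ 0 then EA.zero else if t ≤ 1 then EA.orthosupp a else EA.one

/-- The spectrum of `x` lies in `[0,1]`. -/
def SpectrumIn01 (x : Observable EA) : Prop :=
  x.toFun ⟨Set.Icc 0 1, measurableSet_Icc⟩ = EA.one

/-- `z` is the infimum of `S` in the Olson order on bounded observables. -/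
def IsOlsonInf (S : Set (Observable EA)) (z : Observable EA) : Prop :=
  z.Bounded ∧ (∀ x ∈ S, z.OlsonLe x) ∧
    ∀ w : Observable EA, w.Bounded → (∀ x ∈ S, w.OlsonLe x) → w.OlsonLe z

/-- `z` is the supremum of `S` in the Olson order on bounded observables. -/
def IsOlsonSup (S : Set (Observable EA)) (z : Observable EA) : Prop :=
  z.Bounded ∧ (∀ x ∈ S, x.OlsonLe z) ∧
    ∀ w : Observable EA, w.Bounded → (∀ x ∈ S, x.OlsonLe w) → z.OlsonLe w

end Observable

/-- A spectral resolution: monotone, with infimum 0, supremum 1, left continuous. -/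
def SpectralResolution {E : Type*} (EA : EffectAlgebra E) (F : ℝ → E) : Prop :=
  (∀ t s : ℝ, t < s → EA.le (F t) (F s)) ∧
  EA.IsInf (Set.range F) EA.zero ∧
  EA.IsSup (Set.range F) EA.one ∧
  ∀ s : ℝ, EA.IsSup (F '' Set.Iio s) (F s)


namespace EffectAlgebra

variable {E : Type*}

lemma le_trans' (EA : EffectAlgebra E) {a b c : E} (h1 : EA.le a b) (h2 : EA.le b c) :
    EA.le a c := by
  obtain ⟨d, hd⟩ := h1
  obtain ⟨e, he⟩ := h2
  have h := EA.assoc a d e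
  rw [hd] at h
  simp only [Option.bind_some] at h
  rw [he] at h
  cases hde : EA.add d e with
  | none => rw [hde] at h; simp at h
  | some g =>
    rw [hde] at h; simp only [Option.bind_some] at h
    exact ⟨g, h.symm⟩

lemma one_add_zero (EA : EffectAlgebra E) : EA.add EA.one EA.zero = some EA.one := by
  obtain ⟨b, hb, _⟩ := EA.orth EA.one
  have hb0 : b = EA.zero := EA.pos_one b EA.one (by rw [EA.comm]; exact hb)
  rw [← hb0]; exact hb

lemma add_zero' (EA : EffectAlgebra E) (a : E) : EA.add a EA.zero = some a := by
  obtain ⟨a', ha', huniq⟩ := EA.orth a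
  have h := EA.assoc a' a EA.zero
  rw [EA.comm a' a, ha'] at h
  simp only [Option.bind_some] at h
  rw [EA.one_add_zero] at h
  cases ha0 : EA.add a EA.zero with
  | none => rw [ha0] at h; simp at h
  | some g =>
    rw [ha0] at h; simp only [Option.bind_some] at h
    -- h : some one = EA.add a' g, so a' + g = 1
    obtain ⟨b, hb, hbuniq⟩ := EA.orth a'
    have hga : g = a := by
      have h1 : g = b := hbuniq g h.symm
      have h2 : a = b := hbuniq a (by show EA.add a' a = some EA.one; rw [EA.comm]; exact ha')
      rw [h1, h2]
    rw [hga]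

lemma zero_le' (EA : EffectAlgebra E) (a : E) : EA.le EA.zero a :=
  ⟨a, by rw [EA.comm]; exact EA.add_zero' a⟩

end EffectAlgebra

/-- left-regularization: for a monotone system `{x(t)}` with
infimum `0` and supremum `1` in a σ-lattice effect algebra, the suprema
`x_l(t) := ⋁_{u<t} x(u)` all exist and `{x_l(t)}` is monotone, has infimum `0`,
supremum `1`, and is left-continuous, i.e. is a spectral resolution. -/
theorem stmt11 {E : Type*} (EA : EffectAlgebra E) (hE : EA.SigmaLattice)
    (x : ℝ → E)
    (hmono : ∀ t s : ℝ, t < s → EA.le (x t) (x s))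
    (hinf : EA.IsInf (Set.range x) EA.zero)
    (hsup : EA.IsSup (Set.range x) EA.one) :
    ∃ xl : ℝ → E,
      (∀ t : ℝ, EA.IsSup (x '' Set.Iio t) (xl t)) ∧
      (∀ t s : ℝ, t < s → EA.le (xl t) (xl s)) ∧
      EA.IsInf (Set.range xl) EA.zero ∧
      EA.IsSup (Set.range xl) EA.one ∧
      (∀ s : ℝ, EA.IsSup (xl '' Set.Iio s) (xl s)) := by
  classical
  -- define xl t as the sigma-sup of the sequence x (t - 1/(n+1))
  have hex : ∀ t : ℝ, ∃ s, EA.IsSup (x '' Set.Iio t) s := by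
    intro t
    obtain ⟨s, hs⟩ := hE.1 (fun n : ℕ => x (t - 1 / (n + 1)))
    refine ⟨s, ?_, ?_⟩
    · rintro _ ⟨u, hu, rfl⟩
      obtain ⟨n, hn⟩ := exists_nat_one_div_lt (show (0:ℝ) < t - u by linarith [hu.out])
      have hlt : u < t - 1 / (n + 1) := by
        have : (1:ℝ) / (n + 1) < t - u := hn
        linarith
      exact EA.le_trans' (hmono u _ hlt) (hs.1 _ ⟨n, rfl⟩)
    · intro b hb
      refine hs.2 b ?_
      rintro _ ⟨n, rfl⟩
      refine hb _ ⟨t - 1 / (n + 1), ?_, rfl⟩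
      have : (0:ℝ) < 1 / (n + 1) := by positivity
      simp only [Set.mem_Iio]; linarith
  choose xl hxl using hex
  have hxl_le_x : ∀ t : ℝ, EA.le (xl t) (x t) := by
    intro t
    refine (hxl t).2 (x t) ?_
    rintro _ ⟨u, hu, rfl⟩
    exact hmono u t hu
  have hxlmono : ∀ t s : ℝ, t < s → EA.le (xl t) (xl s) := by
    intro t s hts
    refine (hxl t).2 (xl s) ?_
    rintro _ ⟨u, hu, rfl⟩
    exact (hxl s).1 _ ⟨u, lt_trans hu.out hts, rfl⟩
  refine ⟨xl, hxl, hxlmono, ⟨?_, ?_⟩, ⟨?_, ?_⟩, ?_⟩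
  · rintro _ ⟨t, rfl⟩
    exact EA.zero_le' _
  · intro b hb
    refine hinf.2 b ?_
    rintro _ ⟨t, rfl⟩
    exact EA.le_trans' (hb _ ⟨t, rfl⟩) (hxl_le_x t)
  · rintro _ ⟨t, rfl⟩
    exact EA.le_trans' (hxl_le_x t) (hsup.1 _ ⟨t, rfl⟩)
  · intro b hb
    refine hsup.2 b ?_
    rintro _ ⟨t, rfl⟩
    have h1 : EA.le (x t) (xl (t + 1)) := (hxl (t + 1)).1 _ ⟨t, by simp, rfl⟩
    exact EA.le_trans' h1 (hb _ ⟨t + 1, rfl⟩)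
  · intro s
    constructor
    · rintro _ ⟨t, ht, rfl⟩
      exact hxlmono t s ht
    · intro b hb
      refine (hxl s).2 b ?_
      rintro _ ⟨u, hu, rfl⟩
      obtain ⟨t, hut, hts⟩ := exists_between hu.out
      have h1 : EA.le (x u) (xl t) := (hxl t).1 _ ⟨u, hut, rfl⟩
      exact EA.le_trans' h1 (hb _ ⟨t, hts, rfl⟩)
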